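/- Spectral representation of the response of the finite system: let N ≥ 1 and (b_1,…,b_N) ∈ ℝ^N, and assume (λ_k)_{k=1}^N are eigenvalues of H_N with eigenvectors (φ^k)_{k=1}^N satisfying H_N φ^k = λ_k φ^k and φ^k_1 = 1, such that (φ^1,…,φ^N) is an orthogonal basis of ℝ^N, and set ρ_k := ⟨φ^k, φ^k⟩. Then for every t ≥ 0: v^δ_{1,t} = Σ_{k=1}^N T_t(λ_k)/ρ_k, where δ is the control with δ_0 = 1 and δ_t = 0 for t ≥ 1. -/

import Mathlib

/-
The state vector `V_t = (v_{1,t}, …, v_{N,t})` of the δ-response satisfies the three-term recurrence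
`V_{t+2} = H_N V_{t+1} - V_t` with `V_0 = 0` and `V_1 = e_1`, exactly the recurrence of `T_t`, so
`V_t = T_t(H_N) e_1`. Since the `φ^k` form an orthogonal basis with `φ^k_1 = 1`, we have
`e_1 = Σ_k φ^k / ρ_k`, hence `V_t = Σ_k T_t(λ_k) / ρ_k • φ^k`; its first coordinate is the claim.
-/

/-- `solFin N b f t n` is the solution `v^f_{n,t}` of the finite discrete Schrödinger system
with Dirichlet condition at `n = N+1`:
`v_{n,t+1} + v_{n,t-1} - v_{n+1,t} - v_{n-1,t} + b_n v_{n,t} = 0` for `1 ≤ n ≤ N`, `t ≥ 0`,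
`v_{n,-1} = v_{n,0} = 0`, `v_{0,t} = f_t`, `v_{N+1,t} = 0`
(the first argument after `b f` is the time `t`, the last the space variable `n`). -/
noncomputable def solFin (N : ℕ) (b f : ℕ → ℝ) : ℕ → ℕ → ℝ
  | 0, n => if n = 0 then f 0 else 0
  | 1, n => if n = 0 then f 1 else if n = N + 1 then 0 else
      solFin N b f 0 (n + 1) + solFin N b f 0 (n - 1) - b n * solFin N b f 0 n
  | (t + 2), n => if n = 0 then f (t + 2) else if n = N + 1 then 0 else
      solFin N b f (t + 1) (n + 1) + solFin N b f (t + 1) (n - 1) - b n * solFin N b f (t + 1) n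
        - solFin N b f t n

/-- `cheb lam t` is the polynomial sequence `T_t(λ)` with `T_0 = 0`, `T_1 = 1`,
`T_{t+1}(λ) = λ T_t(λ) - T_{t-1}(λ)` (so `T_t(2x) = U_{t-1}(x)`, Chebyshev of the 2nd kind). -/
noncomputable def cheb (lam : ℝ) : ℕ → ℝ
  | 0 => 0
  | 1 => 1
  | (t + 2) => lam * cheb lam (t + 1) - cheb lam t

/-- The `N × N` symmetric Jacobi matrix `H_N` with diagonal `-b_i` and off-diagonal `1`. -/
noncomputable def jacobiH (N : ℕ) (b : ℕ → ℝ) : Matrix (Fin N) (Fin N) ℝ :=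
  Matrix.of fun i j =>
    if (i : ℕ) = (j : ℕ) then -b ((i : ℕ) + 1)
    else if (i : ℕ) + 1 = (j : ℕ) ∨ (j : ℕ) + 1 = (i : ℕ) then 1 else 0

open Matrix

theorem cheb_add_two (lam : ℝ) (t : ℕ) : cheb lam (t + 2) = lam * cheb lam (t + 1) - cheb lam t :=
  rfl

theorem eq_sum_cheb_smul_of_recurrence {ι κ : Type*} [Fintype ι] [Fintype κ]
    (A : Matrix ι ι ℝ) (lam : κ → ℝ) (phi : κ → ι → ℝ) (heig : ∀ k, A *ᵥ phi k = lam k • phi k)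
    (c : κ → ℝ) (V : ℕ → ι → ℝ) (hV0 : V 0 = 0) (hV1 : V 1 = ∑ k, c k • phi k)
    (hrec : ∀ t, V (t + 2) = A *ᵥ V (t + 1) - V t) (t : ℕ) :
    V t = ∑ k, (c k * cheb (lam k) t) • phi k := by
  induction t using Nat.twoStepInduction with
  | zero => simp [hV0, cheb]
  | one => simp [hV1, cheb]
  | more t ih₀ ih₁ =>
    simp only [hrec, ih₀, ih₁, mulVec_sum, mulVec_smul, heig, smul_smul, ← Finset.sum_sub_distrib,
      ← sub_smul, cheb_add_two]
    exact Finset.sum_congr rfl fun k _ => by ring_nf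

theorem sum_smul_eq_single_of_orthogonal {ι : Type*} [Fintype ι] [DecidableEq ι]
    (phi : ι → ι → ℝ) (horth : ∀ k l, k ≠ l → phi k ⬝ᵥ phi l = 0) (hne : ∀ k, phi k ≠ 0)
    (j : ι) : ∑ k, (phi k j / (phi k ⬝ᵥ phi k)) • phi k = Pi.single j 1 := by
  set P : Matrix ι ι ℝ := Matrix.of phi
  have hPPt : P * Pᵀ = diagonal fun k => phi k ⬝ᵥ phi k := by
    ext k l
    rcases eq_or_ne k l with rfl | hkl
    · simp [P, mul_apply, dotProduct]
    · simpa [P, mul_apply, hkl, dotProduct] using horth k l hkl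
  have hinv : Pᵀ * diagonal (fun k => (phi k ⬝ᵥ phi k)⁻¹) * P = 1 := by
    refine mul_eq_one_comm.mp ?_
    rw [← Matrix.mul_assoc, hPPt, diagonal_mul_diagonal]
    simp [fun k => mul_inv_cancel₀ (dotProduct_self_eq_zero.not.mpr (hne k))]
  ext i
  rw [Pi.single_apply, ← one_apply, ← hinv, mul_apply]
  simp only [Finset.sum_apply, Pi.smul_apply, smul_eq_mul, mul_diagonal, P, transpose_apply,
    of_apply]
  exact Finset.sum_congr rfl fun k _ => by ring

theorem jacobiH_mulVec_apply (N : ℕ) (b u : ℕ → ℝ) (hu : u (N + 1) = 0) (i : Fin N) :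
    (jacobiH N b *ᵥ fun j : Fin N => u (j + 1)) i =
      u (i + 2) + u i - b (i + 1) * u (i + 1) - if (i : ℕ) = 0 then u 0 else 0 := by
  obtain ⟨n, hn⟩ := i
  have hterm : ∀ j : ℕ, (if n = j then -b (n + 1) else
      if n + 1 = j ∨ j + 1 = n then 1 else 0) * u (j + 1) =
      (if j = n then -b (n + 1) * u (n + 1) else 0) + (if j = n + 1 then u (n + 2) else 0) +
        (if j + 1 = n then u n else 0) := by
    intro j
    split_ifs <;> subst_vars <;> first | omega | ring
  simp only [mulVec, dotProduct, jacobiH, of_apply]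
  rw [Fin.sum_univ_eq_sum_range (fun j => (if n = j then -b (n + 1) else
      if n + 1 = j ∨ j + 1 = n then 1 else 0) * u (j + 1))]
  simp only [hterm, Finset.sum_add_distrib, Finset.sum_ite_eq', Finset.mem_range, if_pos hn]
  have hright : (if n + 1 < N then u (n + 2) else 0) = u (n + 2) := by
    split_ifs with h
    · rfl
    · rw [show n + 2 = N + 1 by omega, hu]
  rcases n with _ | m
  · simp [hright]
    ring
  · simp [hright, show m < N by omega]
    ring

section Response

variable (N : ℕ) (b f : ℕ → ℝ)

noncomputable def solVec (t : ℕ) : Fin N → ℝ := fun i => solFin N b f t (i + 1)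

theorem solFin_left_boundary (t : ℕ) : solFin N b f t 0 = f t := by
  rcases t with _ | _ | t <;> simp [solFin]

theorem solFin_right_boundary (t : ℕ) : solFin N b f t (N + 1) = 0 := by
  rcases t with _ | _ | t <;> simp [solFin]

theorem solVec_zero : solVec N b f 0 = 0 := by
  ext i
  simp [solVec, solFin]

theorem solVec_one (i : Fin N) : solVec N b f 1 i = if (i : ℕ) = 0 then f 0 else 0 := by
  simp [solVec, solFin, i.isLt.ne]

theorem solVec_add_two (t : ℕ) (i : Fin N) :
    solVec N b f (t + 2) i =
      (jacobiH N b *ᵥ solVec N b f (t + 1)) i - solVec N b f t i +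
        if (i : ℕ) = 0 then f (t + 1) else 0 := by
  have hiN : (i : ℕ) + 1 ≠ N + 1 := by omega
  unfold solVec
  rw [jacobiH_mulVec_apply N b _ (solFin_right_boundary N b f (t + 1)), solFin_left_boundary]
  simp only [solFin, hiN, Nat.add_one_ne_zero, if_false, Nat.add_sub_cancel]
  ring

end Response

/-- Spectral representation of the response of the finite system:
`v^δ_{1,t} = Σ_k T_t(λ_k) / ρ_k`. -/
theorem spectral_response (N : ℕ) (hN : 1 ≤ N) (b : ℕ → ℝ)
    (lam : Fin N → ℝ) (phi : Fin N → (Fin N → ℝ))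
    (heig : ∀ k, (jacobiH N b).mulVec (phi k) = lam k • phi k)
    (hfirst : ∀ k, phi k ⟨0, hN⟩ = 1)
    (horth : ∀ k l, k ≠ l → dotProduct (phi k) (phi l) = 0)
    (rho : Fin N → ℝ) (hrho : ∀ k, rho k = dotProduct (phi k) (phi k)) :
    ∀ t : ℕ, solFin N b (fun s => if s = 0 then 1 else 0) t 1 =
      ∑ k, cheb (lam k) t / rho k := by
  set δ : ℕ → ℝ := fun s => if s = 0 then 1 else 0
  obtain rfl : rho = fun k => phi k ⬝ᵥ phi k := funext hrho
  have hne : ∀ k, phi k ≠ 0 := fun k h => by simpa [h] using hfirst k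
  have hV1 : solVec N b δ 1 = ∑ k, (phi k ⟨0, hN⟩ / (phi k ⬝ᵥ phi k)) • phi k := by
    rw [sum_smul_eq_single_of_orthogonal phi horth hne]
    ext i
    simp [solVec_one, Pi.single_apply, Fin.ext_iff, δ]
  have hrec : ∀ t, solVec N b δ (t + 2) = jacobiH N b *ᵥ solVec N b δ (t + 1) - solVec N b δ t :=
    fun t => funext fun i => by simp [solVec_add_two, δ]
  intro t
  have hV := congrFun (eq_sum_cheb_smul_of_recurrence _ lam phi heig _ _ (solVec_zero N b δ) hV1
    hrec t) ⟨0, hN⟩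
  simpa [solVec, hfirst, Finset.sum_apply, div_eq_inv_mul] using hV
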